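/- Given the forward inclusion in the constrained-zonotope/strip intersection: if x = ĉ + Ĝ z with Âz = b̂, ‖z‖_∞ ≤ 1, and H_j x = y_j + R_j d_j with ‖d_j‖_∞ ≤ 1 for all j, then setting γ = (z, d_1, …, d_m) one has x = c̄ + Ḡ γ with Ā γ = b̄ and ‖γ‖_∞ ≤ 1, where c̄, Ḡ, Ā, b̄ are as in the intersection formula. -/

import Mathlib

open Matrix

private lemma sum_mulVec' {m a b : ℕ} (A : Fin m → Matrix (Fin a) (Fin b) ℝ)
    (v : Fin b → ℝ) : (∑ j, A j).mulVec v = ∑ j, (A j).mulVec v := by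
  funext i
  simp only [Matrix.mulVec, dotProduct, Matrix.sum_apply, Finset.sum_apply,
    Finset.sum_mul]
  exact Finset.sum_comm

/-- forward inclusion of the constrained-zonotope/strip intersection:
with γ = (z, d_1, …, d_m) one has x = c̄ + Ḡγ, Āγ = b̄ and ‖γ‖_∞ ≤ 1. -/
theorem conZonotope_strips_forward
    {n ng nc m p : ℕ}
    (ch : Fin n → ℝ) (Gh : Matrix (Fin n) (Fin ng) ℝ)
    (Ah : Matrix (Fin nc) (Fin ng) ℝ) (bh : Fin nc → ℝ)
    (H : Fin m → Matrix (Fin p) (Fin n) ℝ)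
    (y : Fin m → (Fin p → ℝ)) (R : Fin m → ℝ)
    (lam : Fin m → Matrix (Fin n) (Fin p) ℝ)
    (x : Fin n → ℝ) (z : Fin ng → ℝ) (d : Fin m → (Fin p → ℝ))
    (hz : ∀ i, |z i| ≤ 1) (hAz : Ah.mulVec z = bh) (hx : x = ch + Gh.mulVec z)
    (hd : ∀ j i, |d j i| ≤ 1)
    (hstrip : ∀ j, (H j).mulVec x = y j + R j • d j) :
    (∀ i, |Sum.elim z (fun jk : Fin m × Fin p => d jk.1 jk.2) i| ≤ 1) ∧
    (Matrix.of fun (r : Fin nc ⊕ Fin m × Fin p) (col : Fin ng ⊕ Fin m × Fin p) =>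
        match r, col with
        | Sum.inl r, Sum.inl cc => Ah r cc
        | Sum.inl _, Sum.inr _ => 0
        | Sum.inr (j, r), Sum.inl cc => (H j * Gh) r cc
        | Sum.inr (j, r), Sum.inr (j', cc) =>
            if j = j' ∧ r = cc then -(R j) else 0).mulVec
      (Sum.elim z (fun jk : Fin m × Fin p => d jk.1 jk.2)) =
      Sum.elim bh (fun jr : Fin m × Fin p => (y jr.1 - (H jr.1).mulVec ch) jr.2) ∧
    x = (ch + ∑ j, (lam j).mulVec (y j - (H j).mulVec ch)) +
      (Matrix.fromCols (((1 : Matrix (Fin n) (Fin n) ℝ) - ∑ j, lam j * H j) * Gh)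
        (Matrix.of fun i (jk : Fin m × Fin p) => R jk.1 * lam jk.1 i jk.2)).mulVec
        (Sum.elim z (fun jk : Fin m × Fin p => d jk.1 jk.2)) := by
  have hy : ∀ j, y j - (H j).mulVec ch = (H j).mulVec (Gh.mulVec z) - R j • d j := by
    intro j
    have h := hstrip j
    rw [hx, Matrix.mulVec_add] at h
    funext i
    have := congrFun h i
    simp only [Pi.add_apply, Pi.sub_apply, Pi.smul_apply, smul_eq_mul] at this ⊢
    linarith
  refine ⟨?_, ?_, ?_⟩
  · intro i
    cases i with
    | inl i => simpa using hz i
    | inr jk => simpa using hd jk.1 jk.2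
  · funext r
    cases r with
    | inl r =>
      have := congrFun hAz r
      simp only [Matrix.mulVec, dotProduct] at this ⊢
      simpa [Fintype.sum_sum_type] using this
    | inr jr =>
      obtain ⟨j, r⟩ := jr
      simp only [Matrix.mulVec, dotProduct, Sum.elim_inr]
      rw [Fintype.sum_sum_type]
      have h1 : (∑ cc : Fin ng,
          (Matrix.of fun (rr : Fin nc ⊕ Fin m × Fin p) (col : Fin ng ⊕ Fin m × Fin p) =>
            match rr, col with
            | Sum.inl r, Sum.inl cc => Ah r cc
            | Sum.inl _, Sum.inr _ => 0
            | Sum.inr (j, r), Sum.inl cc => (H j * Gh) r cc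
            | Sum.inr (j, r), Sum.inr (j', cc) =>
                if j = j' ∧ r = cc then -(R j) else 0) (Sum.inr (j, r)) (Sum.inl cc)
            * Sum.elim z (fun jk : Fin m × Fin p => d jk.1 jk.2) (Sum.inl cc))
          = ((H j).mulVec (Gh.mulVec z)) r := by
        rw [Matrix.mulVec_mulVec]
        simp [Matrix.mulVec, dotProduct]
      have h2 : (∑ jk : Fin m × Fin p,
          (Matrix.of fun (rr : Fin nc ⊕ Fin m × Fin p) (col : Fin ng ⊕ Fin m × Fin p) =>
            match rr, col with
            | Sum.inl r, Sum.inl cc => Ah r cc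
            | Sum.inl _, Sum.inr _ => 0
            | Sum.inr (j, r), Sum.inl cc => (H j * Gh) r cc
            | Sum.inr (j, r), Sum.inr (j', cc) =>
                if j = j' ∧ r = cc then -(R j) else 0) (Sum.inr (j, r)) (Sum.inr jk)
            * Sum.elim z (fun jk : Fin m × Fin p => d jk.1 jk.2) (Sum.inr jk))
          = -(R j) * d j r := by
        rw [Fintype.sum_eq_single (j, r)]
        · simp
        · rintro ⟨j', cc⟩ hne
          have : ¬ (j = j' ∧ r = cc) := by
            rintro ⟨rfl, rfl⟩; exact hne rfl
          simp [this]
      rw [h1, h2]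
      have := congrFun (hy j) r
      simp only [Pi.sub_apply, Pi.smul_apply, smul_eq_mul] at this
      simp only [Pi.sub_apply]
      linarith
  · rw [Matrix.fromCols_mulVec_sumElim]
    have hB : (Matrix.of fun i (jk : Fin m × Fin p) => R jk.1 * lam jk.1 i jk.2).mulVec
        (fun jk : Fin m × Fin p => d jk.1 jk.2)
        = ∑ j, R j • (lam j).mulVec (d j) := by
      funext i
      simp only [Matrix.mulVec, dotProduct, Matrix.of_apply, Finset.sum_apply,
        Pi.smul_apply, smul_eq_mul, Fintype.sum_prod_type]
      refine Finset.sum_congr rfl fun j _ => ?_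
      rw [Finset.mul_sum]
      refine Finset.sum_congr rfl fun k _ => ?_
      ring
    have hL : (((1 : Matrix (Fin n) (Fin n) ℝ) - ∑ j, lam j * H j) * Gh).mulVec z
        = Gh.mulVec z - ∑ j, (lam j).mulVec ((H j).mulVec (Gh.mulVec z)) := by
      rw [Matrix.sub_mul, Matrix.one_mul, Matrix.sub_mulVec, ← Matrix.mulVec_mulVec,
        sum_mulVec']
      simp only [← Matrix.mulVec_mulVec]
    have hS : ∑ j, (lam j).mulVec (y j - (H j).mulVec ch)
        = (∑ j, (lam j).mulVec ((H j).mulVec (Gh.mulVec z))) - ∑ j, R j • (lam j).mulVec (d j) := by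
      rw [← Finset.sum_sub_distrib]
      refine Finset.sum_congr rfl fun j _ => ?_
      rw [hy j, Matrix.mulVec_sub, Matrix.mulVec_smul]
    rw [hB, hL, hS, hx]
    abel
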